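/- arXiv:2605.00194 — 7 statements merged into one kernel-verified Lean document; each statement's English description precedes it below -/
import Mathlib

section
/- For every real number q, every natural number m ≥ 1, and every natural number r ≥ 0, one has S_{m·2^r}(q) = S_{2^r}(q) · S_m(q^{2^r}). -/
/-- The Thue-Morse sequence: `tm n = (-1)^(s₂ n)` where `s₂ n` is the sum of the
binary digits of `n`. -/
def tm (n : ℕ) : ℤ := (-1) ^ (Nat.digits 2 n).sum

/-- The partial sums `S q n = ∑_{0 ≤ j < n} tm j * q^j`. -/
noncomputable def S (q : ℝ) (n : ℕ) : ℝ := ∑ j ∈ Finset.range n, (tm j : ℝ) * q ^ j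

lemma digitsum_step (a : ℕ) :
    (Nat.digits 2 a).sum = a % 2 + (Nat.digits 2 (a / 2)).sum := by
  rcases Nat.eq_zero_or_pos a with h | h
  · simp [h]
  · rw [Nat.digits_def' (by norm_num) h, List.sum_cons]

lemma digitsum_add (r : ℕ) : ∀ a b : ℕ, a < 2 ^ r →
    (Nat.digits 2 (a + 2 ^ r * b)).sum = (Nat.digits 2 a).sum + (Nat.digits 2 b).sum := by
  induction r with
  | zero => intro a b ha; interval_cases a; simp
  | succ r ih =>
    intro a b ha
    have hpow : 2 ^ (r + 1) = 2 * 2 ^ r := by ring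
    rcases Nat.eq_zero_or_pos b with hb | hb
    · simp [hb]
    rw [digitsum_step (a + 2 ^ (r + 1) * b), digitsum_step a]
    set t := 2 ^ r * b with ht
    have hts : 2 ^ (r + 1) * b = 2 * t := by rw [ht]; ring
    have h1 : (a + 2 ^ (r + 1) * b) % 2 = a % 2 := by rw [hts]; omega
    have h2 : (a + 2 ^ (r + 1) * b) / 2 = a / 2 + t := by rw [hts]; omega
    rw [h1, h2, ih (a / 2) b (by omega)]
    ring

lemma tm_add (a b r : ℕ) (ha : a < 2 ^ r) : tm (a + 2 ^ r * b) = tm a * tm b := by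
  rw [tm, tm, tm, digitsum_add r a b ha, pow_add]

lemma sum_range_mul' (f : ℕ → ℝ) (k : ℕ) : ∀ n : ℕ,
    ∑ j ∈ Finset.range (n * k), f j
      = ∑ b ∈ Finset.range n, ∑ a ∈ Finset.range k, f (a + k * b) := by
  intro n
  induction n with
  | zero => simp
  | succ n ih =>
    rw [add_mul, one_mul, Finset.sum_range_add, ih, Finset.sum_range_succ]
    congr 1
    exact Finset.sum_congr rfl fun a _ => by rw [Nat.add_comm, Nat.mul_comm]

theorem S_mul_two_pow (q : ℝ) (m r : ℕ) (hm : 1 ≤ m) :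
    S q (m * 2 ^ r) = S q (2 ^ r) * S (q ^ (2 ^ r)) m := by
  unfold S
  rw [Finset.sum_mul_sum, sum_range_mul' _ _ m, Finset.sum_comm]
  refine Finset.sum_congr rfl fun a ha => Finset.sum_congr rfl fun b hb => ?_
  simp only [Finset.mem_range] at ha hb
  rw [tm_add a b r ha]
  push_cast
  rw [pow_add, pow_mul]
  ring
end

section
/- Let q be a real number with 0 < q < 1, and let m ≥ 1, r ≥ 0 be natural numbers. Then t_{m·2^r} · S_{m·2^r}(q) < 0 if and only if t_m · S_m(q^{2^r}) < 0. -/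
lemma tm_two_mul (n : ℕ) : tm (2 * n) = tm n := by
  rcases Nat.eq_zero_or_pos n with h | h
  · simp [h]
  · unfold tm
    rw [Nat.digits_def' (by norm_num : 1 < 2) (by omega)]
    simp [Nat.mul_div_cancel_left, Nat.mul_mod_right]

lemma tm_two_mul_add_one (n : ℕ) : tm (2 * n + 1) = -tm n := by
  unfold tm
  rw [Nat.digits_def' (by norm_num : 1 < 2) (by omega)]
  have h1 : (2 * n + 1) % 2 = 1 := by omega
  have h2 : (2 * n + 1) / 2 = n := by omega
  rw [h1, h2]
  simp [pow_succ]
  ring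

lemma S_two_mul (q : ℝ) (n : ℕ) : S q (2 * n) = (1 - q) * S (q ^ 2) n := by
  induction n with
  | zero => simp [S]
  | succ k ih =>
    have : 2 * (k + 1) = (2 * k + 1) + 1 := by ring
    rw [this]
    unfold S at *
    rw [Finset.sum_range_succ, Finset.sum_range_succ, Finset.sum_range_succ, ih,
      tm_two_mul, tm_two_mul_add_one]
    push_cast
    ring

theorem sign_test_reduce (q : ℝ) (hq0 : 0 < q) (hq1 : q < 1) (m r : ℕ) (hm : 1 ≤ m) :
    (tm (m * 2 ^ r) : ℝ) * S q (m * 2 ^ r) < 0 ↔ (tm m : ℝ) * S (q ^ (2 ^ r)) m < 0 := by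
  induction r generalizing q with
  | zero => simp
  | succ r ih =>
    have hk : m * 2 ^ (r + 1) = 2 * (m * 2 ^ r) := by ring
    have hq20 : 0 < q ^ 2 := by positivity
    have hq21 : q ^ 2 < 1 := by nlinarith
    have hstep : (tm (m * 2 ^ (r + 1)) : ℝ) * S q (m * 2 ^ (r + 1))
        = (1 - q) * ((tm (m * 2 ^ r) : ℝ) * S (q ^ 2) (m * 2 ^ r)) := by
      rw [hk, tm_two_mul, S_two_mul]; ring
    have hpos : (0 : ℝ) < 1 - q := by linarith
    rw [hstep]
    have h1 : (1 - q) * ((tm (m * 2 ^ r) : ℝ) * S (q ^ 2) (m * 2 ^ r)) < 0 ↔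
        (tm (m * 2 ^ r) : ℝ) * S (q ^ 2) (m * 2 ^ r) < 0 := by
      constructor <;> intro h <;> nlinarith
    rw [h1, ih (q ^ 2) hq20 hq21]
    have : (q ^ 2) ^ 2 ^ r = q ^ 2 ^ (r + 1) := by
      rw [← pow_mul]; ring_nf
    rw [this]
end

section
/- Let α = (√5 - 1)/2 and let β be the unique real number in (0,1) with 1 - β - β² + β³ - β⁴ = 0. If α < q < β, then t_n · S_n(q) < 0 for all n with 1 ≤ n < 5, while t_5 · S_5(q) > 0. (Thus the greedy shooting sequence for such q agrees with the Thue-Morse sequence exactly on its first 5 terms.) -/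
theorem agree_exactly_five (β : ℝ) (hβ0 : 0 < β) (hβ1 : β < 1)
    (hβ : 1 - β - β ^ 2 + β ^ 3 - β ^ 4 = 0)
    (q : ℝ) (hq0 : (Real.sqrt 5 - 1) / 2 < q) (hq1 : q < β) :
    (∀ n : ℕ, 1 ≤ n → n < 5 → (tm n : ℝ) * S q n < 0) ∧ 0 < (tm 5 : ℝ) * S q 5 := by
  have hs5 : Real.sqrt 5 ^ 2 = 5 := Real.sq_sqrt (by norm_num)
  have hs5nn : 0 ≤ Real.sqrt 5 := Real.sqrt_nonneg 5
  have hs2 : (2:ℝ) < Real.sqrt 5 := by nlinarith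
  have hq0' : (0:ℝ) < q := by nlinarith
  have hgold : 1 - q - q ^ 2 < 0 := by nlinarith
  have hq1' : q < 1 := lt_trans hq1 hβ1
  have hfour : (0:ℝ) < (1 - q) * (1 - q ^ 2) :=
    mul_pos (by linarith) (by nlinarith)
  have hqb : q * β < 1 := by nlinarith
  have hbr : 0 < 1 + (q + β) - (q ^ 2 + q * β + β ^ 2)
      + (q ^ 3 + q ^ 2 * β + q * β ^ 2 + β ^ 3) := by
    have h1 : 0 < q - q ^ 2 := by nlinarith
    have h2 : 0 < β - β ^ 2 := by nlinarith
    have h3 : 0 < q ^ 3 := by positivity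
    have h4 : 0 < q ^ 2 * β := by positivity
    have h5 : 0 < q * β ^ 2 := by positivity
    have h6 : 0 < β ^ 3 := by positivity
    linarith
  have hfive := mul_pos (sub_pos.2 hq1) hbr
  constructor
  · intro n h1 h5
    interval_cases n <;>
      simp only [S, Finset.sum_range_succ, Finset.sum_range_zero, tm] <;>
      norm_num <;> nlinarith
  · simp only [S, Finset.sum_range_succ, Finset.sum_range_zero, tm]
    norm_num
    nlinarith [hfive, hβ]
end

section
/- Let α = (√5 - 1)/2 and let β be the unique real number in (0,1) with 1 - β - β² + β³ - β⁴ = 0. If β < q < √α, then t_n · S_n(q) < 0 for all n with 1 ≤ n < 6, while t_6 · S_6(q) > 0. (Thus the greedy shooting sequence for such q agrees with the Thue-Morse sequence exactly on its first 6 terms.) -/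
theorem agree_exactly_six (β : ℝ) (hβ0 : 0 < β) (hβ1 : β < 1)
    (hβ : 1 - β - β ^ 2 + β ^ 3 - β ^ 4 = 0)
    (q : ℝ) (hq0 : β < q) (hq1 : q < Real.sqrt ((Real.sqrt 5 - 1) / 2)) :
    (∀ n : ℕ, 1 ≤ n → n < 6 → (tm n : ℝ) * S q n < 0) ∧ 0 < (tm 6 : ℝ) * S q 6 := by
  have hs5 : Real.sqrt 5 ^ 2 = 5 := Real.sq_sqrt (by norm_num)
  have hs5' : 0 < Real.sqrt 5 := Real.sqrt_pos.2 (by norm_num)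
  have hqpos : 0 < q := hβ0.trans hq0
  have ha : q ^ 2 < (Real.sqrt 5 - 1) / 2 := (Real.lt_sqrt hqpos.le).1 hq1
  have hq1' : q < 1 := by nlinarith
  -- 1 - β - β² < 0
  have hb3 : 1 - β - β ^ 2 < 0 := by nlinarith [mul_pos (pow_pos hβ0 3) (sub_pos.2 hβ1)]
  have hq3 : 1 - q - q ^ 2 < 0 := by nlinarith
  -- f(q) < 0 where f = 1 - x - x² + x³ - x⁴
  have hf : 1 - q - q ^ 2 + q ^ 3 - q ^ 4 < 0 := by
    nlinarith [mul_pos (sub_pos.2 hq0) hβ0, sq_nonneg (q + β), sq_nonneg (q - β),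
      mul_pos hqpos hβ0, sq_nonneg (q*β)]
  have h6 : 0 < 1 - q ^ 2 - q ^ 4 := by nlinarith
  constructor
  · intro n h1 h2
    interval_cases n <;> simp [S, Finset.sum_range_succ, tm] <;> nlinarith
  · simp [S, Finset.sum_range_succ, tm]
    nlinarith [mul_pos (sub_pos.2 hq1') h6]
end

section
/- For every integer k ≥ 1, taking q = 1 - 2^(-k), the greedy shooting sequence satisfies a_q(N) = t_N for all 0 ≤ N < 3·2^(k-1), and a_q(3·2^(k-1)) ≠ t_{3·2^(k-1)}. -/
/-- The greedy shooting sequence: `a q N = 1` if `∑_{0 ≤ j < N} a q j * q^j ≤ 0`,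
and `a q N = -1` otherwise. -/
noncomputable def a (q : ℝ) : ℕ → ℤ
  | N => if (∑ j : Fin N, (a q j : ℝ) * q ^ (j : ℕ)) ≤ 0 then 1 else -1
decreasing_by all_goals exact j.isLt

/-!
Write `F_x(n) = ∑_{j<n} t_j x^j` (`tmSum x n`). As long as `a_q` agrees with `t` below `n`, the
greedy rule picks `t_n` exactly when `F_q(n) ≤ 0 ↔ t_n = 1`. The Thue–Morse recursions give
`F_x(2n) = (1 - x) F_{x²}(n)` and `F_x(2n+1) = (1 - x) F_{x²}(n) + t_n x^{2n}` with
`F_{x²}(n) ∈ (-1, 1]`, so the sign is right whenever `1 - y ≤ y^{2m}` for each factorisation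
`n = 2^i (2m+1)` and `y = x^{2^i}`. For `x = 1 - 2^{-k}` Bernoulli's inequality gives this for
all `n < 3·2^{k-1}`. At `n = 3·2^{k-1}`, however, `t_n = 1` while the sum
`F_x(n) = ∏_{l<k-1} (1 - x^{2^l}) · (1 - y - y²)`, with `y = x^{2^{k-1}} ≤ e^{-1/2}`, is positive.
-/

lemma tm_zero : tm 0 = 1 := by simp [tm]

lemma tm_eq_one_or_eq_neg_one (n : ℕ) : tm n = 1 ∨ tm n = -1 :=
  neg_one_pow_eq_or ℤ _

lemma tm_two_pow_mul (e n : ℕ) : tm (2 ^ e * n) = tm n := by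
  induction e with
  | zero => simp
  | succ e ih => rw [pow_succ', mul_assoc, tm_two_mul, ih]

lemma tm_three_mul_two_pow (e : ℕ) : tm (3 * 2 ^ e) = 1 := by
  rw [mul_comm, tm_two_pow_mul, show 3 = 2 * 1 + 1 from rfl, tm_two_mul_add_one,
    show 1 = 2 * 0 + 1 from rfl, tm_two_mul_add_one, tm_zero, neg_neg]

noncomputable def tmSum (x : ℝ) (n : ℕ) : ℝ := ∑ j ∈ Finset.range n, (tm j : ℝ) * x ^ j

lemma tmSum_zero (x : ℝ) : tmSum x 0 = 0 := by simp [tmSum]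

lemma tmSum_one (x : ℝ) : tmSum x 1 = 1 := by simp [tmSum, tm_zero]

lemma tmSum_two_mul (x : ℝ) (n : ℕ) : tmSum x (2 * n) = (1 - x) * tmSum (x ^ 2) n := by
  induction n with
  | zero => simp [tmSum]
  | succ n ih =>
    rw [show 2 * (n + 1) = 2 * n + 1 + 1 by ring, tmSum, Finset.sum_range_succ,
      Finset.sum_range_succ, ← tmSum, ih, tmSum, tmSum, Finset.sum_range_succ, tm_two_mul,
      tm_two_mul_add_one]
    push_cast
    ring

lemma tmSum_two_mul_add_one (x : ℝ) (n : ℕ) :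
    tmSum x (2 * n + 1) = (1 - x) * tmSum (x ^ 2) n + tm n * x ^ (2 * n) := by
  rw [tmSum, Finset.sum_range_succ, ← tmSum, tmSum_two_mul, tm_two_mul]

lemma tmSum_three (x : ℝ) : tmSum x 3 = 1 - x - x ^ 2 := by
  simp [tmSum, Finset.sum_range_succ, tm_zero, show tm 1 = -1 by decide,
    show tm 2 = -1 by decide]
  ring

lemma tmSum_mem_Ioc {y : ℝ} (hy0 : 0 ≤ y) (hy1 : y < 1) (n : ℕ) :
    tmSum y n ∈ Set.Ioc (-1) 1 := by
  induction n using Nat.evenOddRec generalizing y with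
  | h0 => simp [tmSum_zero]
  | h_even n ih =>
    obtain ⟨hlo, hhi⟩ := ih (sq_nonneg y) (by nlinarith)
    rw [tmSum_two_mul]
    constructor <;> nlinarith
  | h_odd n ih =>
    rcases Nat.eq_zero_or_pos n with rfl | hn
    · simp [tmSum_one]
    obtain ⟨hlo, hhi⟩ := ih (sq_nonneg y) (by nlinarith)
    have hpow : y ^ (2 * n) ≤ y := pow_le_of_le_one hy0 hy1.le (by omega)
    have hpow0 : 0 ≤ y ^ (2 * n) := by positivity
    rw [tmSum_two_mul_add_one]
    rcases tm_eq_one_or_eq_neg_one n with h | h <;> rw [h] <;> push_cast <;>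
      constructor <;> nlinarith

def SignCondition (x : ℝ) (n : ℕ) : Prop :=
  ∀ i m : ℕ, 1 ≤ m → n = 2 ^ i * (2 * m + 1) → 1 - x ^ 2 ^ i ≤ (x ^ 2 ^ i) ^ (2 * m)

lemma SignCondition.of_two_mul {x : ℝ} {n : ℕ} (h : SignCondition x (2 * n)) :
    SignCondition (x ^ 2) n := by
  intro i m hm hn
  have := h (i + 1) m hm (by rw [hn, pow_succ']; ring)
  rwa [← pow_mul, ← pow_succ']

lemma tmSum_nonpos_iff_tm_eq_one {x : ℝ} (hx0 : 0 < x) (hx1 : x < 1) {n : ℕ}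
    (h : SignCondition x n) : tmSum x n ≤ 0 ↔ tm n = 1 := by
  induction n using Nat.evenOddRec generalizing x with
  | h0 => simp [tmSum_zero, tm_zero]
  | h_even n ih =>
    rw [tmSum_two_mul, tm_two_mul, ← ih (by positivity) (by nlinarith) h.of_two_mul]
    have h1x : 0 < 1 - x := by linarith
    exact ⟨fun h' => nonpos_of_mul_nonpos_right h' h1x, mul_nonpos_of_nonneg_of_nonpos h1x.le⟩
  | h_odd n _ =>
    rcases Nat.eq_zero_or_pos n with rfl | hn
    · simp [tmSum_one, show tm 1 = -1 by decide]
    have hkey : 1 - x ≤ x ^ (2 * n) := by simpa using h 0 n hn (by ring)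
    obtain ⟨hlo, hhi⟩ := tmSum_mem_Ioc (sq_nonneg x) (by nlinarith) n
    have hpow : 0 < x ^ (2 * n) := by positivity
    rw [tmSum_two_mul_add_one, tm_two_mul_add_one]
    rcases tm_eq_one_or_eq_neg_one n with htm | htm <;> rw [htm] <;> push_cast
    · exact iff_of_false (by nlinarith) (by decide)
    · exact iff_of_true (by nlinarith) trivial

lemma two_mul_le_mul_two_pow {m j : ℕ} (h : 2 * m + 1 < 3 * 2 ^ j) :
    2 * m ≤ (j + 1) * 2 ^ j := by
  rcases j with _ | _ | j
  · omega
  · omega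
  · exact (Nat.lt_of_succ_lt h).le.trans (Nat.mul_le_mul_right _ (by omega))

lemma one_div_two_pow_le_one (n : ℕ) : (1 : ℝ) / 2 ^ n ≤ 1 :=
  div_le_one_of_le₀ (one_le_pow₀ one_le_two) (by positivity)

lemma one_sub_mul_le_pow {δ : ℝ} (hδ : δ ≤ 2) (n : ℕ) : 1 - n * δ ≤ (1 - δ) ^ n := by
  simpa [sub_eq_add_neg] using one_add_mul_le_pow (a := -δ) (by linarith) n

/-- Since `y^(2^j) ≥ 1/2` by Bernoulli, `y^(2m) ≥ (y^(2^j))^(j+1) ≥ 2^-(j+1) ≥ 1 - y`. -/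
lemma one_sub_le_pow_of_two_mul_add_one_lt {y : ℝ} {j m : ℕ} (hy1 : y ≤ 1)
    (hy : 1 - 1 / 2 ^ (j + 1) ≤ y) (hm : 2 * m + 1 < 3 * 2 ^ j) : 1 - y ≤ y ^ (2 * m) := by
  have hy0 : 0 ≤ y := (sub_nonneg.mpr (one_div_two_pow_le_one _)).trans hy
  have hhalf : 1 / 2 ≤ y ^ 2 ^ j := by
    have := one_sub_mul_le_pow (δ := 1 - y) (by linarith) (2 ^ j)
    rw [sub_sub_cancel] at this
    have hj : ((2 ^ j : ℕ) : ℝ) * (1 / 2 ^ (j + 1)) = 1 / 2 := by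
      push_cast; field_simp; ring
    nlinarith [mul_le_mul_of_nonneg_left (show 1 - y ≤ 1 / 2 ^ (j + 1) by linarith)
      (Nat.cast_nonneg (α := ℝ) (2 ^ j))]
  calc 1 - y ≤ (1 / 2) ^ (j + 1) := by rw [one_div_pow]; linarith
    _ ≤ (y ^ 2 ^ j) ^ (j + 1) := by gcongr
    _ ≤ y ^ (2 * m) := by
      rw [← pow_mul]
      exact pow_le_pow_of_le_one hy0 hy1 ((two_mul_le_mul_two_pow hm).trans_eq (mul_comm _ _))

lemma signCondition_one_sub_one_div_two_pow {p n : ℕ} (hn : n < 3 * 2 ^ p) :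
    SignCondition (1 - 1 / 2 ^ (p + 1)) n := by
  rintro i m hm rfl
  have hip : i ≤ p := by
    have : 2 ^ i < 2 ^ p := by nlinarith [Nat.one_le_two_pow (n := i)]
    exact (Nat.pow_lt_pow_iff_right (by norm_num)).mp this |>.le
  obtain ⟨j, rfl⟩ := Nat.exists_eq_add_of_le hip
  have hε0 : (0 : ℝ) ≤ 1 / 2 ^ (i + j + 1) := by positivity
  have hε1 := one_div_two_pow_le_one (i + j + 1)
  apply one_sub_le_pow_of_two_mul_add_one_lt (j := j)
  · exact pow_le_one₀ (by linarith) (by linarith)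
  · calc 1 - 1 / (2 : ℝ) ^ (j + 1) = 1 - (2 ^ i : ℕ) * (1 / 2 ^ (i + j + 1)) := by
          push_cast; field_simp; ring
      _ ≤ _ := one_sub_mul_le_pow (by linarith) _
  · rw [pow_add] at hn
    nlinarith [Nat.one_le_two_pow (n := i)]

lemma tmSum_three_mul_two_pow_pos {x : ℝ} (hx0 : 0 ≤ x) (hx1 : x < 1) {e : ℕ}
    (h : x ^ 2 ^ e + x ^ 2 ^ (e + 1) < 1) : 0 < tmSum x (3 * 2 ^ e) := by
  induction e generalizing x with
  | zero =>
    rw [pow_zero, mul_one, tmSum_three]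
    simp only [pow_zero, pow_one, zero_add] at h
    linarith
  | succ e ih =>
    rw [pow_succ', ← mul_assoc, mul_comm 3 2, mul_assoc, tmSum_two_mul]
    have hx2 : (x ^ 2) ^ 2 ^ e + (x ^ 2) ^ 2 ^ (e + 1) < 1 := by
      rwa [← pow_mul, ← pow_mul, ← pow_succ', ← pow_succ']
    exact mul_pos (by linarith) (ih (sq_nonneg x) (by nlinarith) hx2)

/-- With `N = 2^(p+1)`, `(q^(2^p))^2 = (1 - 1/N)^N ≤ e⁻¹`, which forces `q^(2^p) < 0.61`. -/
lemma pow_two_pow_add_pow_two_pow_succ_lt_one (p : ℕ) :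
    (1 - 1 / 2 ^ (p + 1) : ℝ) ^ 2 ^ p + (1 - 1 / 2 ^ (p + 1) : ℝ) ^ 2 ^ (p + 1) < 1 := by
  set y := (1 - 1 / 2 ^ (p + 1) : ℝ) ^ 2 ^ p
  have hy0 : 0 ≤ y := pow_nonneg (sub_nonneg.mpr (one_div_two_pow_le_one _)) _
  have hsq : (1 - 1 / 2 ^ (p + 1) : ℝ) ^ 2 ^ (p + 1) ≤ Real.exp (-1) := by
    have := Real.one_sub_div_pow_le_exp_neg (n := 2 ^ (p + 1)) (t := 1)
      (by exact_mod_cast Nat.one_le_two_pow)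
    exact_mod_cast this
  have hy2 : y ^ 2 = (1 - 1 / 2 ^ (p + 1) : ℝ) ^ 2 ^ (p + 1) := by
    rw [← pow_mul, ← pow_succ]
  nlinarith [Real.exp_neg_one_lt_d9]

lemma a_eq_ite_tmSum {q : ℝ} {N : ℕ} (h : ∀ j < N, a q j = tm j) :
    a q N = if tmSum q N ≤ 0 then 1 else -1 := by
  rw [a, Fin.sum_univ_eq_sum_range (fun j => (a q j : ℝ) * q ^ j), tmSum]
  congr 2
  refine Finset.sum_congr rfl fun j hj => ?_
  rw [h j (Finset.mem_range.mp hj)]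

lemma a_eq_tm_of_forall_lt {q : ℝ} {L : ℕ} (h : ∀ N < L, tmSum q N ≤ 0 ↔ tm N = 1) :
    ∀ N < L, a q N = tm N := by
  intro N
  induction N using Nat.strong_induction_on with
  | _ N ih =>
    intro hN
    rw [a_eq_ite_tmSum fun j hj => ih j hj (hj.trans hN)]
    rcases tm_eq_one_or_eq_neg_one N with htm | htm
    · rw [if_pos ((h N hN).mpr htm), htm]
    · rw [if_neg (fun hF => by simp [(h N hN).mp hF] at htm), htm]

theorem corollary_pow_two (k : ℕ) (hk : 1 ≤ k) :
    (∀ N < 3 * 2 ^ (k - 1), a (1 - (2 : ℝ) ^ (-(k : ℤ))) N = tm N) ∧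
      a (1 - (2 : ℝ) ^ (-(k : ℤ))) (3 * 2 ^ (k - 1)) ≠ tm (3 * 2 ^ (k - 1)) := by
  obtain ⟨p, rfl⟩ : ∃ p, k = p + 1 := ⟨k - 1, by omega⟩
  rw [Nat.add_sub_cancel, zpow_neg, zpow_natCast, ← one_div]
  have hq0 : 0 < (1 - 1 / 2 ^ (p + 1) : ℝ) :=
    sub_pos.mpr ((div_lt_one (by positivity)).mpr (one_lt_pow₀ one_lt_two (by omega)))
  have hq1 : (1 - 1 / 2 ^ (p + 1) : ℝ) < 1 := sub_lt_self _ (by positivity)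
  have hagree := a_eq_tm_of_forall_lt fun N hN =>
    tmSum_nonpos_iff_tm_eq_one hq0 hq1 (signCondition_one_sub_one_div_two_pow hN)
  refine ⟨hagree, ?_⟩
  have hpos :=
    tmSum_three_mul_two_pow_pos hq0.le hq1 (pow_two_pow_add_pow_two_pow_succ_lt_one p)
  rw [a_eq_ite_tmSum hagree, if_neg hpos.not_ge, tm_three_mul_two_pow]
  decide
end

section
/- Let α = (√5 - 1)/2 and let β be the unique real number in (0,1) with 1 - β - β² + β³ - β⁴ = 0. For every integer k ≥ 1, one has β^(2^(2-k)) < 1 - 2^(-k) < α^(2^(1-k)). -/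
theorem beta_alpha_sandwich (β : ℝ) (hβ0 : 0 < β) (hβ1 : β < 1)
    (hβ : 1 - β - β ^ 2 + β ^ 3 - β ^ 4 = 0)
    (k : ℕ) (hk : 1 ≤ k) :
    β ^ ((2 : ℝ) ^ (2 - (k : ℤ))) < 1 - (2 : ℝ) ^ (-(k : ℤ)) ∧
      1 - (2 : ℝ) ^ (-(k : ℤ)) < ((Real.sqrt 5 - 1) / 2) ^ ((2 : ℝ) ^ (1 - (k : ℤ))) := by
  have h2ne : (2:ℝ) ≠ 0 := by norm_num
  constructor
  · -- β side, by induction on k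
    induction k, hk using Nat.le_induction with
    | base =>
      have hb2 : β ^ 2 < 1/2 := by
        nlinarith [sq_nonneg (β^2 - 1/2), sq_nonneg (β - 7/10), sq_nonneg β,
          sq_nonneg (β-1), sq_nonneg (β+1), sq_nonneg (β^2+β)]
      norm_num
      linarith
    | succ n hn ih =>
      set t : ℝ := (2:ℝ) ^ (-(n:ℤ)) with ht
      have ht0 : 0 < t := zpow_pos (by norm_num) _
      have ht1 : t ≤ 1 := by
        rw [ht]
        calc (2:ℝ) ^ (-(n:ℤ)) ≤ (2:ℝ)^(0:ℤ) := by
              apply zpow_le_zpow_right₀ one_le_two; omega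
          _ = 1 := by norm_num
      have he1 : (2:ℝ) ^ (2 - ((n+1:ℕ):ℤ)) = 2 * t := by
        rw [ht, show (2 - ((n+1:ℕ):ℤ)) = 1 + (-(n:ℤ)) by push_cast; ring,
          zpow_add₀ h2ne, zpow_one]
      have he2 : (2:ℝ) ^ (2 - (n:ℤ)) = 2 * (2 * t) := by
        rw [ht, show (2 - (n:ℤ)) = 1 + (1 + -(n:ℤ)) by ring,
          zpow_add₀ h2ne, zpow_add₀ h2ne, zpow_one]
      have he3 : (2:ℝ) ^ (-((n+1:ℕ):ℤ)) = t / 2 := by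
        rw [ht, show (-((n+1:ℕ):ℤ)) = (-(n:ℤ)) + (-1) by push_cast; ring,
          zpow_add₀ h2ne, zpow_neg_one]
        ring
      rw [he1, he3]
      rw [he2] at ih
      have hsq : (β ^ ((2:ℝ) * t)) ^ 2 = β ^ ((2:ℝ) * (2 * t)) := by
        rw [← Real.rpow_natCast (β ^ ((2:ℝ)*t)) 2, ← Real.rpow_mul hβ0.le]
        norm_num; ring_nf
      have hgoal2 : (β ^ ((2:ℝ) * t)) ^ 2 < (1 - t/2) ^ 2 := by
        rw [hsq]
        calc β ^ ((2:ℝ) * (2 * t)) < 1 - t := ih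
          _ ≤ (1 - t/2)^2 := by nlinarith [sq_nonneg t]
      have h12 : (0:ℝ) ≤ 1 - t/2 := by linarith
      exact lt_of_pow_lt_pow_left₀ 2 h12 hgoal2
  · -- α side
    set α : ℝ := (Real.sqrt 5 - 1) / 2 with hα
    have h5lt : Real.sqrt 5 < 2.2360680 := by
      rw [show (2.2360680:ℝ) = Real.sqrt (2.2360680^2) from (Real.sqrt_sq (by norm_num)).symm]
      apply Real.sqrt_lt_sqrt (by norm_num)
      norm_num
    have h5gt : (2:ℝ) < Real.sqrt 5 := by
      rw [show (2:ℝ) = Real.sqrt 4 from (Real.sqrt_eq_iff_eq_sq (by norm_num) (by norm_num)).mpr (by norm_num) |>.symm]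
      exact Real.sqrt_lt_sqrt (by norm_num) (by norm_num)
    have hα0 : 0 < α := by rw [hα]; linarith
    have hsq5 : Real.sqrt 5 ^ 2 = 5 := Real.sq_sqrt (by norm_num)
    have hexp1 : (2.7182818283:ℝ) < Real.exp 1 := Real.exp_one_gt_d9
    have hkey : Real.exp (-(1/2)) ≤ α := by
      have h1 : Real.exp (-(1/2)) ^ 2 ≤ α ^ 2 := by
        have : Real.exp (-(1/2)) ^ 2 = Real.exp (-1) := by
          rw [sq, ← Real.exp_add]; norm_num
        rw [this, Real.exp_neg]
        rw [inv_le_iff_one_le_mul₀ (Real.exp_pos 1)]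
        have hα2 : α ^ 2 = (3 - Real.sqrt 5) / 2 := by
          rw [hα]; field_simp; nlinarith [hsq5]
        rw [hα2]
        nlinarith [hexp1, h5lt]
      exact (pow_le_pow_iff_left₀ (Real.exp_pos _).le hα0.le (by norm_num)).mp h1
    have hlog : -(1/2:ℝ) ≤ Real.log α := by
      rw [Real.le_log_iff_exp_le hα0]; exact hkey
    set t : ℝ := (2:ℝ) ^ (-(k:ℤ)) with ht
    have ht0 : 0 < t := zpow_pos (by norm_num) _
    have he1 : (2:ℝ) ^ (1 - (k:ℤ)) = 2 * t := by
      rw [ht, show (1 - (k:ℤ)) = 1 + (-(k:ℤ)) by ring, zpow_add₀ h2ne, zpow_one]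
    rw [he1, Real.rpow_def_of_pos hα0]
    calc 1 - t < Real.exp (-t) := by
          have := Real.add_one_lt_exp (show -t ≠ 0 by linarith)
          linarith
      _ ≤ Real.exp (Real.log α * (2 * t)) := by
          apply Real.exp_le_exp.2
          nlinarith [mul_le_mul_of_nonneg_right hlog (by linarith : (0:ℝ) ≤ 2*t)]
end

section
/- There exists a unique real number β with 0 < β < 1 satisfying 1 - β - β² + β³ - β⁴ = 0; moreover, this β satisfies α < β and β² < α, where α = (√5 - 1)/2. -/
lemma f_strict_anti {a b : ℝ} (ha : 0 ≤ a) (hb : b ≤ 1) (hab : a < b) :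
    1 - b - b^2 + b^3 - b^4 < 1 - a - a^2 + a^3 - a^4 := by
  have hb0 : 0 ≤ b := ha.trans hab.le
  have ha1 : a < 1 := hab.trans_le hb
  have hg : 0 < 1 + (a+b) - (a^2+a*b+b^2) + (a+b)*(a^2+b^2) := by
    nlinarith [mul_nonneg ha (sub_nonneg.2 ha1.le), mul_nonneg hb0 (sub_nonneg.2 hb),
      mul_le_one₀ ha1.le hb0 hb, mul_nonneg (mul_nonneg ha ha) hb0,
      mul_nonneg (mul_nonneg ha hb0) hb0, mul_nonneg (mul_nonneg ha ha) ha,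
      mul_nonneg (mul_nonneg hb0 hb0) hb0]
  nlinarith [mul_pos (sub_pos.2 hab) hg]

theorem beta_exists_unique :
    (∃! β : ℝ, 0 < β ∧ β < 1 ∧ 1 - β - β ^ 2 + β ^ 3 - β ^ 4 = 0) ∧
      ∀ β : ℝ, 0 < β → β < 1 → 1 - β - β ^ 2 + β ^ 3 - β ^ 4 = 0 →
        (Real.sqrt 5 - 1) / 2 < β ∧ β ^ 2 < (Real.sqrt 5 - 1) / 2 := by
  constructor
  · -- existence and uniqueness
    have hcont : ContinuousOn (fun x : ℝ => 1 - x - x ^ 2 + x ^ 3 - x ^ 4) (Set.Icc 0 1) := by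
      fun_prop
    have hmem : (0 : ℝ) ∈ Set.Ioo (1 - 1 - (1:ℝ) ^ 2 + 1 ^ 3 - 1 ^ 4)
        (1 - 0 - (0:ℝ) ^ 2 + 0 ^ 3 - 0 ^ 4) := by norm_num
    obtain ⟨β, hβmem, hβeq⟩ := intermediate_value_Ioo' (by norm_num : (0:ℝ) ≤ 1) hcont hmem
    have hβeq' : 1 - β - β ^ 2 + β ^ 3 - β ^ 4 = 0 := hβeq
    refine ⟨β, ⟨hβmem.1, hβmem.2, hβeq'⟩, ?_⟩
    rintro γ ⟨hγ0, hγ1, hγeq⟩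
    rcases lt_trichotomy γ β with h | h | h
    · exfalso
      have := f_strict_anti hγ0.le hβmem.2.le h
      rw [hγeq, hβeq'] at this; exact lt_irrefl 0 this
    · exact h
    · exfalso
      have := f_strict_anti hβmem.1.le hγ1.le h
      rw [hγeq, hβeq'] at this; exact lt_irrefl 0 this
  · intro β hβ0 hβ1 hβeq
    set a : ℝ := (Real.sqrt 5 - 1) / 2 with ha_def
    have hs2 : Real.sqrt 5 ^ 2 = 5 := Real.sq_sqrt (by norm_num)
    have hs_lb : 2 < Real.sqrt 5 := by
      nlinarith [Real.sqrt_nonneg 5]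
    have hs_ub : Real.sqrt 5 < 3 := by
      nlinarith [Real.sqrt_nonneg 5]
    have ha0 : 0 < a := by rw [ha_def]; linarith
    have ha1 : a < 1 := by rw [ha_def]; linarith
    have haeq : a ^ 2 + a - 1 = 0 := by rw [ha_def]; nlinarith
    have hfa : 0 < 1 - a - a ^ 2 + a ^ 3 - a ^ 4 := by
      nlinarith [mul_pos (mul_pos (mul_pos ha0 ha0) ha0) (sub_pos.2 ha1)]
    constructor
    · -- a < β
      by_contra h
      push_neg at h
      rcases eq_or_lt_of_le h with h | h
      · rw [h] at hβeq; linarith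
      · have := f_strict_anti hβ0.le ha1.le h
        rw [hβeq] at this; linarith
    · -- β ^ 2 < a
      set γ : ℝ := Real.sqrt a with hγ_def
      have hγ0 : 0 < γ := Real.sqrt_pos.2 ha0
      have hγ2 : γ ^ 2 = a := Real.sq_sqrt ha0.le
      have h3 : γ ^ 3 = γ * a := by rw [show γ ^ 3 = γ * γ ^ 2 by ring, hγ2]
      have h4 : γ ^ 4 = a ^ 2 := by rw [show γ ^ 4 = (γ ^ 2) ^ 2 by ring, hγ2]
      have hfγ : 1 - γ - γ ^ 2 + γ ^ 3 - γ ^ 4 < 0 := by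
        rw [hγ2, h3, h4]
        nlinarith [mul_pos hγ0 (sub_pos.2 ha1)]
      have hβγ : β < γ := by
        by_contra h
        push_neg at h
        rcases eq_or_lt_of_le h with h | h
        · rw [← h] at hβeq; linarith
        · have := f_strict_anti hγ0.le hβ1.le h
          rw [hβeq] at this; linarith
      calc β ^ 2 < γ ^ 2 := by nlinarith
        _ = a := hγ2
end
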